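/- Let N ≥ 3 be a prime and let M_k(N) be the N^k × N^k matrices over ZMod N defined recursively as above. Then for every k ≥ 1, no two distinct rows of M_k(N) are N-ary complements, and no two distinct columns of M_k(N) are N-ary complements. -/

import Mathlib

/-- The `N × N` matrix `M_1(N)` over `ZMod N` with entries
`m_{ij} = i + Σ_{l=1}^{j-i} (N - l + 1) (mod N)` for `i ≤ j`, and `m_{ij} = m_{ji}` for `i > j`. -/
def M1 (N : ℕ) (i j : ℕ) : ZMod N :=
  if i ≤ j then ((i + ∑ l ∈ Finset.Icc 1 (j - i), (N - l + 1) : ℕ) : ZMod N)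
  else ((j + ∑ l ∈ Finset.Icc 1 (i - j), (N - l + 1) : ℕ) : ZMod N)

/-- The recursively defined `N^k × N^k` matrices `M_k(N)`: the entry of `M_{k+1}(N)` at
position `(i·N^k + p, j·N^k + q)` is `M_k(N)_{pq} + M_1(N)_{ij}`; the base case `k = 0` is the
`1 × 1` zero matrix, so that `M_1(N)` is recovered at `k = 1`. -/
def Mk (N : ℕ) : ℕ → ℕ → ℕ → ZMod N
  | 0, _, _ => 0
  | k + 1, a, b => Mk N k (a % N ^ k) (b % N ^ k) + M1 N (a / N ^ k) (b / N ^ k)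

/-- Two vectors `x, y` with entries in `ZMod N` are `N`-ary complements if there is a
permutation `f` of `ZMod N` with `f (x i) = y i` for all `i` and `f (x i) ≠ x i` for some `i`. -/
def NaryComplement (N : ℕ) {n : ℕ} (x y : Fin n → ZMod N) : Prop :=
  ∃ f : Equiv.Perm (ZMod N), (∀ i, f (x i) = y i) ∧ ∃ i, f (x i) ≠ x i

/-!
Reading indices in base `N`, the entry `M_k(N)_{ab}` is the sum over the digit positions `l < k`
of `M_1(N)` at the `l`-th digits of `a` and `b`, and `2 · M_1(N)_{xa} = x + a - (x - a)²` in
`ZMod N`. For odd `N` the latter gives `M_1(N)_{x,a} = M_1(N)_{x,a+1}` exactly when `x = a`.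
So if rows `i ≠ j` differ in digit `m` and `a` is the `m`-th digit of `i`, the columns `a·N^m` and
`(a+1)·N^m` carry equal entries in row `i` but distinct entries in row `j`, and no map of `ZMod N`
sends row `i` to row `j`. Columns follow because `M_k(N)` is symmetric.
-/

lemma two_mul_M1_of_le {N i j : ℕ} (hij : i ≤ j) (hj : j < N) :
    2 * M1 N i j = (i + j : ZMod N) - (i - j) ^ 2 := by
  have sum_eq : ∀ d < N,
      (2 : ZMod N) * ((∑ l ∈ Finset.Icc 1 d, (N - l + 1) : ℕ) : ZMod N) = d - d ^ 2 := by
    intro d hd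
    induction d with
    | zero => simp
    | succ d ih =>
      rw [Finset.sum_Icc_succ_top (by omega), Nat.cast_add, mul_add, ih (by omega),
        Nat.cast_add, Nat.cast_sub hd.le, ZMod.natCast_self]
      push_cast
      ring
  rw [M1, if_pos hij, Nat.cast_add, mul_add, sum_eq _ (by omega), Nat.cast_sub hij]
  ring

lemma M1_comm (N i j : ℕ) : M1 N i j = M1 N j i := by
  unfold M1
  rcases lt_trichotomy i j with h | rfl | h
  · rw [if_pos h.le, if_neg h.not_ge]
  · rfl
  · rw [if_neg h.not_ge, if_pos h.le]

lemma two_mul_M1 {N i j : ℕ} (hi : i < N) (hj : j < N) :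
    2 * M1 N i j = (i + j : ZMod N) - (i - j) ^ 2 := by
  rcases le_total i j with h | h
  · exact two_mul_M1_of_le h hj
  · rw [M1_comm, two_mul_M1_of_le h hi]
    ring

lemma M1_eq_M1_succ_iff {N x a : ℕ} (hN : Odd N) (hx : x < N) (ha : a < N) :
    M1 N x a = M1 N x ((a + 1) % N) ↔ x = a := by
  have two_unit : IsUnit (2 : ZMod N) := by
    exact_mod_cast (ZMod.isUnit_iff_coprime 2 N).mpr (Nat.coprime_two_left.mpr hN)
  have shift :
      (x + ↑(a + 1) - (x - ↑(a + 1)) ^ 2 : ZMod N) = x + a - (x - a) ^ 2 + 2 * (x - a) := by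
    push_cast
    ring
  rw [← two_unit.mul_right_inj, two_mul_M1 hx ha, two_mul_M1 hx (Nat.mod_lt _ (by omega)),
    ZMod.natCast_mod, shift, left_eq_add, two_unit.mul_right_eq_zero, sub_eq_zero,
    ZMod.natCast_eq_natCast_iff', Nat.mod_eq_of_lt hx, Nat.mod_eq_of_lt ha]

lemma Mk_comm (N k a b : ℕ) : Mk N k a b = Mk N k b a := by
  induction k generalizing a b with
  | zero => rfl
  | succ k ih => rw [Mk, Mk, ih, M1_comm]

lemma mod_pow_div_pow_mod {N k l : ℕ} (a : ℕ) (hl : l < k) :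
    a % N ^ k / N ^ l % N = a / N ^ l % N := by
  rw [← Nat.mod_mul_right_div_self, ← Nat.mod_mul_right_div_self, ← pow_succ,
    Nat.mod_mod_of_dvd a (pow_dvd_pow N hl)]

lemma mul_pow_lt_pow {N u m k : ℕ} (hu : u < N) (hm : m < k) : u * N ^ m < N ^ k := calc
  u * N ^ m < N ^ (m + 1) := by
    rw [pow_succ']
    exact Nat.mul_lt_mul_of_pos_right hu (pow_pos (by omega) m)
  _ ≤ N ^ k := Nat.pow_le_pow_right (by omega) hm

lemma mul_pow_div_pow_mod {N u : ℕ} (m l : ℕ) (hu : u < N) :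
    u * N ^ m / N ^ l % N = if l = m then u else 0 := by
  have hN : 0 < N := by omega
  rcases lt_trichotomy l m with h | rfl | h
  · obtain ⟨d, rfl⟩ := Nat.exists_eq_add_of_lt h
    have hsplit : u * N ^ (l + d + 1) = u * N ^ d * N * N ^ l := by ring
    rw [if_neg h.ne, hsplit, Nat.mul_div_cancel _ (by positivity), Nat.mul_mod_left]
  · rw [if_pos rfl, Nat.mul_div_cancel _ (by positivity), Nat.mod_eq_of_lt hu]
  · rw [if_neg h.ne', Nat.div_eq_of_lt (mul_pow_lt_pow hu h), Nat.zero_mod]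

lemma eq_of_forall_div_pow_mod_eq {N k i j : ℕ} (hi : i < N ^ k) (hj : j < N ^ k)
    (h : ∀ l < k, i / N ^ l % N = j / N ^ l % N) : i = j := by
  suffices ∀ l ≤ k, i % N ^ l = j % N ^ l by
    simpa [Nat.mod_eq_of_lt hi, Nat.mod_eq_of_lt hj] using this k le_rfl
  intro l hl
  induction l with
  | zero => simp [Nat.mod_one]
  | succ l ih => rw [Nat.mod_pow_succ, Nat.mod_pow_succ, ih (by omega), h l (by omega)]

lemma Mk_eq_sum {N k a b : ℕ} (ha : a < N ^ k) (hb : b < N ^ k) :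
    Mk N k a b = ∑ l ∈ Finset.range k, M1 N (a / N ^ l % N) (b / N ^ l % N) := by
  induction k generalizing a b with
  | zero => simp [Mk]
  | succ k ih =>
    have hN : 0 < N := Nat.pos_of_ne_zero (by rintro rfl; simp at ha)
    have top_digit {c : ℕ} (hc : c < N ^ (k + 1)) : c / N ^ k = c / N ^ k % N :=
      (Nat.mod_eq_of_lt (Nat.div_lt_of_lt_mul (by rwa [← pow_succ]))).symm
    rw [Mk, top_digit ha, top_digit hb, ih (Nat.mod_lt _ (by positivity))
      (Nat.mod_lt _ (by positivity)), Finset.sum_range_succ]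
    congr 1
    refine Finset.sum_congr rfl fun l hl => ?_
    have hlk := Finset.mem_range.mp hl
    rw [mod_pow_div_pow_mod a hlk, mod_pow_div_pow_mod b hlk]

lemma Mk_mul_pow_sub_Mk_mul_pow {N k m a u v : ℕ} (hm : m < k) (ha : a < N ^ k) (hu : u < N)
    (hv : v < N) :
    Mk N k a (u * N ^ m) - Mk N k a (v * N ^ m) =
      M1 N (a / N ^ m % N) u - M1 N (a / N ^ m % N) v := by
  rw [Mk_eq_sum ha (mul_pow_lt_pow hu hm), Mk_eq_sum ha (mul_pow_lt_pow hv hm),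
    ← Finset.sum_sub_distrib, Finset.sum_eq_single_of_mem m (Finset.mem_range.mpr hm)]
  · rw [mul_pow_div_pow_mod _ _ hu, mul_pow_div_pow_mod _ _ hv, if_pos rfl, if_pos rfl]
  · intro l _ hlm
    rw [mul_pow_div_pow_mod _ _ hu, mul_pow_div_pow_mod _ _ hv, if_neg hlm, if_neg hlm, sub_self]

lemma exists_Mk_row_eq_ne {N k : ℕ} (hN : Odd N) {i j : Fin (N ^ k)} (hij : i ≠ j) :
    ∃ t s : Fin (N ^ k), Mk N k i t = Mk N k i s ∧ Mk N k j t ≠ Mk N k j s := by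
  obtain ⟨m, hm, hdigit⟩ : ∃ m < k, (i : ℕ) / N ^ m % N ≠ j / N ^ m % N := by
    by_contra! h
    exact hij (Fin.ext (eq_of_forall_div_pow_mod_eq i.isLt j.isLt h))
  set a := (i : ℕ) / N ^ m % N
  have ha : a < N := Nat.mod_lt _ hN.pos
  have ha' : (a + 1) % N < N := Nat.mod_lt _ hN.pos
  refine ⟨⟨a * N ^ m, mul_pow_lt_pow ha hm⟩, ⟨(a + 1) % N * N ^ m, mul_pow_lt_pow ha' hm⟩,
    ?_, ?_⟩
  · rw [← sub_eq_zero, Mk_mul_pow_sub_Mk_mul_pow hm i.isLt ha ha', sub_eq_zero,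
      M1_eq_M1_succ_iff hN ha ha]
  · rw [Ne, ← sub_eq_zero, Mk_mul_pow_sub_Mk_mul_pow hm j.isLt ha ha', sub_eq_zero,
      M1_eq_M1_succ_iff hN (Nat.mod_lt _ hN.pos) ha]
    exact hdigit.symm

lemma not_naryComplement_of_eq_of_ne {N n : ℕ} {x y : Fin n → ZMod N} {t s : Fin n}
    (hx : x t = x s) (hy : y t ≠ y s) : ¬ NaryComplement N x y := by
  rintro ⟨f, hf, -⟩
  exact hy (by rw [← hf t, ← hf s, hx])

theorem Mk_no_complementary_rows_or_cols_general (N : ℕ) (hN : 3 ≤ N) (hNp : N.Prime)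
    (k : ℕ) (i j : Fin (N ^ k)) (hij : i ≠ j) :
    ¬ NaryComplement N (fun t : Fin (N ^ k) => Mk N k i t) (fun t : Fin (N ^ k) => Mk N k j t) ∧
    ¬ NaryComplement N (fun t : Fin (N ^ k) => Mk N k t i) (fun t : Fin (N ^ k) => Mk N k t j) := by
  have rows : ¬ NaryComplement N (fun t : Fin (N ^ k) => Mk N k i t) (fun t => Mk N k j t) := by
    obtain ⟨t, s, hi, hj⟩ := exists_Mk_row_eq_ne (hNp.odd_of_ne_two (by omega)) hij
    exact not_naryComplement_of_eq_of_ne hi hj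
  refine ⟨rows, ?_⟩
  simpa only [Mk_comm N k _ i, Mk_comm N k _ j] using rows

theorem Mk_no_complementary_rows_or_cols (N : ℕ) (hN : 3 ≤ N) (hNp : N.Prime)
    (k : ℕ) (hk : 1 ≤ k) (i j : Fin (N ^ k)) (hij : i ≠ j) :
    ¬ NaryComplement N (fun t : Fin (N ^ k) => Mk N k i t) (fun t : Fin (N ^ k) => Mk N k j t) ∧
    ¬ NaryComplement N (fun t : Fin (N ^ k) => Mk N k t i) (fun t : Fin (N ^ k) => Mk N k t j) :=
  Mk_no_complementary_rows_or_cols_general N hN hNp k i j hij
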